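/- For any x ∈ ℝⁿ with action gap δ = max_i x_i − max{x_j : x_j < max_i x_i} (δ = ∞ when all entries are equal), the ℓ₁ distance between softmax_h(x) and argmax-e(x) equals 2·Σ_{i : x_i < x_max} e^{h(x_i)} / (m·e^{h(x_max)} + Σ_{i : x_i < x_max} e^{h(x_i)}), where m is the number of maximizers, and this quantity is at most 2n·e^{−c'δ} whenever c'(a−b) ≤ h(a) − h(b) for all a ≥ b. -/

import Mathlib

/-! Softmax and `argmax-e` are both probability vectors, and on the argmax set softmax equals
`e^{h(x_max)} / Z ≤ 1 / m` because `Z ≥ m e^{h(x_max)}`; so their ℓ₁ distance is twice the softmax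
mass off the argmax set. For the bound with `c' ≥ 0`, every entry off the argmax set is at least `δ`
below the maximum, hence `e^{h(x_i)} ≤ e^{h(x_max)} e^{-c'δ}`; for `c' < 0` the quotient is at most
`1 ≤ e^{-c'δ}` because `δ > 0`. -/

open Real Finset

noncomputable def softmaxH {n : ℕ} (h : ℝ → ℝ) (x : EuclideanSpace ℝ (Fin n)) :
    EuclideanSpace ℝ (Fin n) :=
  WithLp.toLp 2 (fun i => Real.exp (h (x i)) / ∑ j, Real.exp (h (x j)))

noncomputable def maxVal {n : ℕ} [NeZero n] (x : EuclideanSpace ℝ (Fin n)) : ℝ :=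
  Finset.univ.sup' Finset.univ_nonempty x

/-- Indices strictly below the maximum. -/
noncomputable def subMax {n : ℕ} [NeZero n] (x : EuclideanSpace ℝ (Fin n)) : Finset (Fin n) :=
  Finset.univ.filter (fun j => x j < maxVal x)

/-- Indices achieving the maximum. -/
noncomputable def argmaxSet {n : ℕ} [NeZero n] (x : EuclideanSpace ℝ (Fin n)) : Finset (Fin n) :=
  Finset.univ.filter (fun j => x j = maxVal x)

noncomputable def argmaxE {n : ℕ} [NeZero n] (x : EuclideanSpace ℝ (Fin n)) :
    EuclideanSpace ℝ (Fin n) :=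
  WithLp.toLp 2 (fun i => if x i = maxVal x then (1 : ℝ) / (argmaxSet x).card else 0)

theorem sum_abs_sub_eq_two_mul_sum_compl {ι : Type*} [Fintype ι] [DecidableEq ι]
    (p q : ι → ℝ) (A : Finset ι) (hsum : ∑ i, p i = ∑ i, q i)
    (hle : ∀ i ∈ A, p i ≤ q i) (hq : ∀ i ∉ A, q i = 0) (hp : ∀ i ∉ A, 0 ≤ p i) :
    ∑ i, |p i - q i| = 2 * ∑ i ∈ Aᶜ, p i := by
  have hA : ∑ i ∈ A, |p i - q i| = ∑ i ∈ A, (q i - p i) :=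
    sum_congr rfl fun i hi => by rw [abs_sub_comm, abs_of_nonneg (sub_nonneg.2 (hle i hi))]
  have hAc : ∑ i ∈ Aᶜ, |p i - q i| = ∑ i ∈ Aᶜ, p i :=
    sum_congr rfl fun i hi => by
      rw [mem_compl] at hi
      rw [hq i hi, sub_zero, abs_of_nonneg (hp i hi)]
  have hqA : ∑ i ∈ A, q i = ∑ i, q i := by
    rw [← sum_add_sum_compl A q, sum_eq_zero fun i hi => hq i (mem_compl.1 hi), add_zero]
  rw [← sum_add_sum_compl A, hA, hAc, sum_sub_distrib, hqA, ← hsum, ← sum_add_sum_compl A p]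
  ring

theorem div_add_le_of_le_mul {a b r : ℝ} (ha : 0 ≤ a) (hb : 0 < b) (h : a ≤ b * r) :
    a / (b + a) ≤ r := by
  have hr : 0 ≤ r := nonneg_of_mul_nonneg_right (ha.trans h) hb
  rw [div_le_iff₀ (by positivity)]
  nlinarith

section maxVal

variable {n : ℕ} [NeZero n] (x : EuclideanSpace ℝ (Fin n))

theorem le_maxVal (i : Fin n) : x i ≤ maxVal x :=
  le_sup' x (mem_univ i)

theorem argmaxSet_nonempty : (argmaxSet x).Nonempty := by
  obtain ⟨i, -, hi⟩ := exists_mem_eq_sup' univ_nonempty x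
  exact ⟨i, mem_filter.2 ⟨mem_univ i, hi.symm⟩⟩

theorem compl_argmaxSet : (argmaxSet x)ᶜ = subMax x := by
  ext i
  simp only [argmaxSet, subMax, mem_compl, mem_filter, mem_univ, true_and]
  exact ⟨fun hne => (le_maxVal x i).lt_of_ne hne, ne_of_lt⟩

theorem sum_exp_eq_card_mul_add (h : ℝ → ℝ) :
    ∑ j, exp (h (x j)) =
      (argmaxSet x).card * exp (h (maxVal x)) + ∑ i ∈ subMax x, exp (h (x i)) := by
  rw [← sum_add_sum_compl (argmaxSet x), compl_argmaxSet,
    sum_congr rfl fun i hi => by rw [(mem_filter.1 hi).2], sum_const, nsmul_eq_mul]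

theorem sum_abs_softmaxH_sub_argmaxE (h : ℝ → ℝ) :
    ∑ i, |softmaxH h x i - argmaxE x i| =
      2 * (∑ i ∈ subMax x, exp (h (x i))) /
        ((argmaxSet x).card * exp (h (maxVal x)) + ∑ i ∈ subMax x, exp (h (x i))) := by
  set Z := ∑ j, exp (h (x j)) with hZ
  have hZpos : 0 < Z := sum_pos (fun j _ => exp_pos _) univ_nonempty
  have hm : (0 : ℝ) < (argmaxSet x).card := by exact_mod_cast (argmaxSet_nonempty x).card_pos
  have hsum : ∑ i, softmaxH h x i = ∑ i, argmaxE x i := by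
    simp only [softmaxH, argmaxE, PiLp.toLp_apply, ← sum_div, ← sum_filter]
    rw [← hZ, div_self hZpos.ne', sum_const, nsmul_eq_mul, mul_one]
    exact (div_self hm.ne').symm
  have hle : ∀ i ∈ argmaxSet x, softmaxH h x i ≤ argmaxE x i := by
    intro i hi
    have hxi := (mem_filter.1 hi).2
    simp only [softmaxH, argmaxE, PiLp.toLp_apply, hxi, if_true]
    rw [div_le_div_iff₀ hZpos hm, one_mul, hZ, sum_exp_eq_card_mul_add]
    linarith [sum_nonneg fun i (_ : i ∈ subMax x) => (exp_pos (h (x i))).le]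
  have hq : ∀ i ∉ argmaxSet x, argmaxE x i = 0 := fun i hi =>
    if_neg fun hxi => hi (mem_filter.2 ⟨mem_univ i, hxi⟩)
  rw [sum_abs_sub_eq_two_mul_sum_compl _ _ _ hsum hle hq fun i _ => (div_pos (exp_pos _) hZpos).le,
    compl_argmaxSet, ← sum_exp_eq_card_mul_add]
  simp only [softmaxH, PiLp.toLp_apply, ← sum_div, mul_div_assoc]

theorem sup'_subMax_lt_maxVal (hne : (subMax x).Nonempty) : (subMax x).sup' hne x < maxVal x :=
  (sup'_lt_iff hne).2 fun _ hi => (mem_filter.1 hi).2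

theorem sum_subMax_exp_le {h : ℝ → ℝ} {c : ℝ} (hc₀ : 0 ≤ c)
    (hc : ∀ a b : ℝ, b ≤ a → c * (a - b) ≤ h a - h b) (hne : (subMax x).Nonempty) :
    ∑ i ∈ subMax x, exp (h (x i)) ≤
      n * (exp (h (maxVal x)) * exp (-c * (maxVal x - (subMax x).sup' hne x))) := by
  set δ := maxVal x - (subMax x).sup' hne x
  have hterm : ∀ i ∈ subMax x, exp (h (x i)) ≤ exp (h (maxVal x)) * exp (-c * δ) := by
    intro i hi
    have hδ : δ ≤ maxVal x - x i := sub_le_sub_left (le_sup' x hi) _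
    have := hc _ _ (le_maxVal x i)
    rw [← exp_add]
    exact exp_le_exp.2 (by nlinarith)
  calc ∑ i ∈ subMax x, exp (h (x i))
      ≤ (subMax x).card * (exp (h (maxVal x)) * exp (-c * δ)) := by
        simpa using sum_le_sum hterm
    _ ≤ n * (exp (h (maxVal x)) * exp (-c * δ)) := by
        gcongr
        simpa using card_le_univ (subMax x)

theorem sum_subMax_exp_div_le {h : ℝ → ℝ} {c : ℝ}
    (hc : ∀ a b : ℝ, b ≤ a → c * (a - b) ≤ h a - h b) (hne : (subMax x).Nonempty) :
    (∑ i ∈ subMax x, exp (h (x i))) /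
        ((argmaxSet x).card * exp (h (maxVal x)) + ∑ i ∈ subMax x, exp (h (x i))) ≤
      n * exp (-c * (maxVal x - (subMax x).sup' hne x)) := by
  have hS : 0 ≤ ∑ i ∈ subMax x, exp (h (x i)) := sum_nonneg fun _ _ => (exp_pos _).le
  have hm : (1 : ℝ) ≤ (argmaxSet x).card := by exact_mod_cast (argmaxSet_nonempty x).card_pos
  have hE := exp_pos (h (maxVal x))
  rcases le_or_gt 0 c with hc₀ | hc₀
  · refine div_add_le_of_le_mul hS (by positivity) ((sum_subMax_exp_le x hc₀ hc hne).trans ?_)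
    rw [mul_left_comm]
    exact mul_le_mul_of_nonneg_right (le_mul_of_one_le_left hE.le hm) (by positivity)
  · have hgap := sub_pos.2 (sup'_subMax_lt_maxVal x hne)
    have hn : (1 : ℝ) ≤ n := by exact_mod_cast NeZero.one_le
    calc _ ≤ (1 : ℝ) := div_le_one_of_le₀ (le_add_of_nonneg_left (by positivity)) (by positivity)
      _ ≤ n * exp (-c * (maxVal x - (subMax x).sup' hne x)) :=
        one_le_mul_of_one_le_of_one_le hn (one_le_exp (by nlinarith))

end maxVal

/-- Explicit ℓ₁ computation of the distance between `softmax_h` and `argmax-e`, and the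
exponential action-gap bound. -/
theorem stmt_4 {n : ℕ} [NeZero n] (h : ℝ → ℝ) (c' : ℝ)
    (x : EuclideanSpace ℝ (Fin n)) :
    (∑ i, |softmaxH h x i - argmaxE x i|) =
      2 * (∑ i ∈ subMax x, Real.exp (h (x i))) /
        ((argmaxSet x).card * Real.exp (h (maxVal x)) + ∑ i ∈ subMax x, Real.exp (h (x i))) ∧
    ((∀ a b : ℝ, b ≤ a → c' * (a - b) ≤ h a - h b) →
      ∀ hne : (subMax x).Nonempty,
        2 * (∑ i ∈ subMax x, Real.exp (h (x i))) /
            ((argmaxSet x).card * Real.exp (h (maxVal x)) +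
              ∑ i ∈ subMax x, Real.exp (h (x i))) ≤
          2 * n * Real.exp (-c' * (maxVal x - (subMax x).sup' hne x))) := by
  refine ⟨sum_abs_softmaxH_sub_argmaxE x h, fun hc hne => ?_⟩
  rw [mul_div_assoc, mul_assoc]
  exact mul_le_mul_of_nonneg_left (sum_subMax_exp_div_le x hc hne) zero_le_two
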